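/- On the Lie algebra A_{5,7}^{-1,-1,1}⊕ℝ with structure equations (e^{15}, -e^{25}, -e^{35}, e^{45}, 0, 0), the pair F = -e^{13} + e^{24} + e^{56} and ρ = -e^{126} - e^{145} - e^{235} - e^{346} satisfies dF = 0, dρ = 0, F^3 ≠ 0, and F∧ρ = 0. -/
import Mathlib


open ExteriorAlgebra

noncomputable section

/-- The exterior algebra Λ*(g*) of a 6-dimensional real Lie algebra g,
    identified with the exterior algebra on ℝ^6. -/
abbrev E6 : Type := ExteriorAlgebra ℝ (Fin 6 → ℝ)

/-- The basis 1-forms e^1, ..., e^6 (0-indexed). -/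
def e (i : Fin 6) : E6 := ι ℝ (Pi.single i 1)

/-- Structure equations: d of the basis 1-forms. -/
def d1 : Fin 6 → E6 :=
  ![e 0 * e 4,
    -(e 1 * e 4),
    -(e 2 * e 4),
    e 3 * e 4,
    0,
    0]

/-- Leibniz: d(e^i ∧ e^j) = de^i ∧ e^j - e^i ∧ de^j. -/
def d2 (i j : Fin 6) : E6 := d1 i * e j - e i * d1 j

/-- Leibniz: d(e^i ∧ e^j ∧ e^k) = de^i ∧ e^j ∧ e^k - e^i ∧ de^j ∧ e^k + e^i ∧ e^j ∧ de^k. -/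
def d3 (i j k : Fin 6) : E6 := d1 i * e j * e k - e i * d1 j * e k + e i * e j * d1 k

/-- F. -/
def F : E6 := -e 0 * e 2 + e 1 * e 3 + e 4 * e 5

/-- dF via the Leibniz rule. -/
def dF : E6 := -d2 0 2 + d2 1 3 + d2 4 5

/-- ρ. -/
def ρ : E6 := -e 0 * e 1 * e 5 - e 0 * e 3 * e 4 - e 1 * e 2 * e 4 - e 2 * e 3 * e 5

/-- dρ via the Leibniz rule. -/
def dρ : E6 := -d3 0 1 5 - d3 0 3 4 - d3 1 2 4 - d3 2 3 5

lemma e_sq (i : Fin 6) : e i * e i = 0 := ι_sq_zero _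
lemma e_sq' (i : Fin 6) (x : E6) : e i * (e i * x) = 0 := by
  rw [← mul_assoc, e_sq, zero_mul]
lemma e_swap (i j : Fin 6) (_ : i < j) : e j * e i = -(e i * e j) :=
  eq_neg_of_add_eq_zero_left (ι_add_mul_swap _ _)
lemma e_swap' (i j : Fin 6) (h : i < j) (x : E6) : e j * (e i * x) = -(e i * (e j * x)) := by
  rw [← mul_assoc, ← mul_assoc, e_swap i j h, neg_mul]

/-- The top form e^1∧...∧e^6 as `ιMulti`. -/
def ω : E6 := ιMulti ℝ 6 (fun i => Pi.single i 1)

lemma omega_eq : ω = e 0 * (e 1 * (e 2 * (e 3 * (e 4 * e 5)))) := by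
  rw [ω, ιMulti_apply]
  simp [List.ofFn_succ, e, mul_assoc]

/-- A family of alternating maps: the determinant in degree 6, zero elsewhere. -/
def detf : ∀ i : ℕ, (Fin 6 → ℝ) [⋀^Fin i]→ₗ[ℝ] ℝ := fun i =>
  if h : i = 6 then by subst h; exact Matrix.detRowAlternating else 0

lemma lift_omega : liftAlternating detf ω = 1 := by
  rw [ω, liftAlternating_apply_ιMulti]
  show Matrix.detRowAlternating _ = 1
  show Matrix.det _ = 1
  rw [show (fun i => Pi.single i (1:ℝ)) = (1 : Matrix (Fin 6) (Fin 6) ℝ) from by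
    ext i j; simp [Matrix.one_apply, Pi.single_apply, eq_comm], Matrix.det_one]

lemma Fcube : F * F * F = (6 : ℕ) • ω := by
  rw [omega_eq]
  simp (config := { decide := true }) only [F, mul_add, add_mul, mul_assoc, mul_neg, neg_mul,
    neg_neg, mul_zero, zero_mul, e_sq, e_sq', e_swap, e_swap', neg_add_rev, neg_zero]
  abel

lemma d1_0 : d1 0 = e 0 * e 4 := rfl
lemma d1_1 : d1 1 = -(e 1 * e 4) := rfl
lemma d1_2 : d1 2 = -(e 2 * e 4) := rfl
lemma d1_3 : d1 3 = e 3 * e 4 := rfl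
lemma d1_4 : d1 4 = 0 := rfl
lemma d1_5 : d1 5 = 0 := rfl

set_option maxHeartbeats 1000000 in
lemma dF_zero : dF = 0 := by
  simp (config := { decide := true }) only [dF, d2, d1_0, d1_1, d1_2, d1_3, d1_4, d1_5,
    sub_eq_add_neg, mul_add, add_mul, mul_assoc, mul_neg, neg_mul,
    neg_neg, mul_zero, zero_mul, e_sq, e_sq', e_swap, e_swap', neg_add_rev, neg_zero]
  abel

set_option maxHeartbeats 1000000 in
lemma dρ_zero : dρ = 0 := by
  simp (config := { decide := true }) only [dρ, d3, d1_0, d1_1, d1_2, d1_3, d1_4, d1_5,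
    sub_eq_add_neg, mul_add, add_mul, mul_assoc, mul_neg, neg_mul,
    neg_neg, mul_zero, zero_mul, e_sq, e_sq', e_swap, e_swap', neg_add_rev, neg_zero]
  abel

set_option maxHeartbeats 1000000 in
lemma Fρ_zero : F * ρ = 0 := by
  simp (config := { decide := true }) only [F, ρ, sub_eq_add_neg, mul_add, add_mul, mul_assoc,
    mul_neg, neg_mul, neg_neg, mul_zero, zero_mul, e_sq, e_sq', e_swap, e_swap', neg_add_rev,
    neg_zero]
  abel

/-- Symplectic half-flat structure on A_{5,7}^{-1,-1,1} ⊕ ℝ. -/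
theorem stmt8 : dF = 0 ∧ dρ = 0 ∧ F * F * F ≠ 0 ∧ F * ρ = 0 := by
  refine ⟨dF_zero, dρ_zero, ?_, Fρ_zero⟩
  rw [Fcube]
  intro h
  have := congrArg (liftAlternating detf) h
  rw [map_nsmul, lift_omega, map_zero] at this
  norm_num at this
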